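/- arXiv:2504.07713 — 3 statements merged into one kernel-verified Lean document; each statement's English description precedes it below -/
import Mathlib

section
/- Let ℓ ≥ 1 and let a_1, …, a_ℓ be positive integers with a_1 + ⋯ + a_ℓ = n. Then n/gcd(a_1, …, a_ℓ) divides the multinomial coefficient n!/(a_1!·a_2!⋯a_ℓ!). -/
open PowerSeries Finset

noncomputable section

/-- `ℚ[[q]]` -/
abbrev QQ : Type := PowerSeries ℚ
/-- `(ℚ[[q]])[[z]]` -/
abbrev QQZ : Type := PowerSeries QQ

/-- The rank of a partition: largest part minus number of parts. -/
def Nat.Partition.rank {n : ℕ} (p : n.Partition) : ℤ :=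
  (p.parts.sup : ℤ) - (Multiset.card p.parts : ℤ)

/-- `N(m,n)`: the number of partitions of `n` with rank `m`. -/
def Nrk (m : ℤ) (n : ℕ) : ℕ := Nat.card {p : n.Partition // p.rank = m}

/-- The `k`-th rank moment `R_k(q) = ∑_{n≥0} (∑_m m^k N(m,n)) q^n`. -/
def Rmom (k : ℕ) : QQ :=
  PowerSeries.mk fun n => ∑ m ∈ Finset.Icc (-(n : ℤ)) (n : ℤ), (m : ℚ) ^ k * (Nrk m n : ℚ)

/-- The crank of a partition. -/
def Nat.Partition.crank {n : ℕ} (p : n.Partition) : ℤ :=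
  if p.parts.count 1 = 0 then (p.parts.sup : ℤ)
  else ((Multiset.card (p.parts.filter fun x => p.parts.count 1 < x)) : ℤ)
        - (p.parts.count 1 : ℤ)

/-- `M(m,n)`: crank counts, with the exceptional values at `n = 1`. -/
def Mcr (m : ℤ) (n : ℕ) : ℤ :=
  if n = 1 then (if m = 1 ∨ m = -1 then 1 else if m = 0 then -1 else 0)
  else (Nat.card {p : n.Partition // p.crank = m} : ℤ)

/-- The `k`-th crank moment `C_k(q) = ∑_{n≥0} (∑_m m^k M(m,n)) q^n`. -/
def Cmom (k : ℕ) : QQ :=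
  PowerSeries.mk fun n => ∑ m ∈ Finset.Icc (-(n : ℤ)) (n : ℤ), (m : ℚ) ^ k * (Mcr m n : ℚ)

/-- `(q)_∞ = ∏_{n≥1} (1 - q^n)`, defined coefficientwise via its stable truncations. -/
def qPoch : QQ :=
  PowerSeries.mk fun m =>
    PowerSeries.coeff (R := ℚ) m (∏ n ∈ Finset.Icc 1 m, (1 - (PowerSeries.X : QQ) ^ n))

/-- `S(z) = ∑_{n≥0} z^(2n)/(4^n (2n+1)!)`, the power series of `2 sinh(z/2)/z`. -/
def Sz {R : Type*} [CommRing R] [Algebra ℚ R] : PowerSeries R :=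
  PowerSeries.mk fun m =>
    if Even m then algebraMap ℚ R ((4 ^ (m / 2) * (m + 1).factorial : ℚ))⁻¹ else 0

/-- Formal exponential of a power series (with zero constant term) over a `ℚ`-algebra. -/
def pexp {R : Type*} [CommRing R] [Algebra ℚ R] (F : PowerSeries R) : PowerSeries R :=
  PowerSeries.mk fun m =>
    ∑ n ∈ Finset.range (m + 1), (n.factorial : ℚ)⁻¹ • PowerSeries.coeff (R := R) m (F ^ n)

/-- `φ(λ) = ∏_j 2^(m_j)/(m_j! (j!)^(m_j))` where `m_j` is the number of parts equal to `j`. -/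
def phiP {n : ℕ} (p : n.Partition) : ℚ :=
  ∏ j ∈ Finset.Icc 1 n,
    (2 : ℚ) ^ (p.parts.count j) /
      ((p.parts.count j).factorial * (j.factorial : ℚ) ^ (p.parts.count j))

/-- `h_λ = ∏_j h_j^(m_j)`. -/
def prodPow {n : ℕ} (h : ℕ → QQ) (p : n.Partition) : QQ :=
  ∏ j ∈ Finset.Icc 1 n, h j ^ (p.parts.count j)

/-- The partition trace `Tr_n(φ,h) = ∑_{λ ⊢ n} φ(λ) h_λ`. -/
def Trphi (h : ℕ → QQ) (n : ℕ) : QQ :=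
  ∑ p : n.Partition, PowerSeries.C (R := ℚ) (phiP p) * prodPow h p

/-- The partition trace `Tr_n(ψ,h)` with `ψ(λ) = (-1)^(m_1+⋯+m_n) φ(λ)`. -/
def Trpsi (h : ℕ → QQ) (n : ℕ) : QQ :=
  ∑ p : n.Partition,
    PowerSeries.C (R := ℚ) ((-1) ^ (Multiset.card p.parts) * phiP p) * prodPow h p

/-- The Eisenstein series `G_k = -B_k/(2k) + ∑_{n,m≥1} m^(k-1) q^(nm)` for even `k ≥ 2`,
and `G_k = 0` otherwise. -/
def Gk (k : ℕ) : QQ :=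
  if 2 ≤ k ∧ Even k then
    PowerSeries.mk fun r =>
      if r = 0 then -(bernoulli k : ℚ) / (2 * k)
      else ∑ p ∈ Nat.divisorsAntidiagonal r, (p.2 : ℚ) ^ (k - 1)
  else 0

/-- The Eisenstein-type series `g_ℓ`. -/
def gl (l : ℕ) : QQ :=
  if l = 0 then 1
  else if Odd l then 0
  else
    PowerSeries.mk fun r =>
      if r = 0 then ((1 : ℚ) - 2 ^ (l - 1)) * (bernoulli l : ℚ) / (2 * l)
      else
        (∑ p ∈ Nat.divisorsAntidiagonal r,
          if 3 * (p.2 : ℤ) ≤ 2 * (p.1 : ℤ) - 1 then ((2 * (p.1 : ℤ) - 3 * (p.2 : ℤ) : ℤ) : ℚ) ^ (l - 1) else 0)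
        - (∑ p ∈ Nat.divisorsAntidiagonal r,
          if 6 * (p.2 : ℤ) ≤ (p.1 : ℤ) - 1 then (((p.1 : ℤ) - 6 * (p.2 : ℤ) : ℤ) : ℚ) ^ (l - 1) else 0)

/-- The derivation `D = q d/dq` on `ℚ[[q]]`. -/
def Dq (f : QQ) : QQ := PowerSeries.mk fun n => (n : ℚ) * PowerSeries.coeff (R := ℚ) n f

/-- `∑_{k≥0} R_k(q) z^k/k!`. -/
def Rgen : QQZ := PowerSeries.mk fun k => (k.factorial : ℚ)⁻¹ • Rmom k

/-- `∑_{k≥0} C_k(q) z^k/k!`. -/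
def Cgen : QQZ := PowerSeries.mk fun k => (k.factorial : ℚ)⁻¹ • Cmom k

/-- The defining identity of the sequence `(f_k)`:
`∑_{k≥0} R_k(q) z^k/k! = S(z) (q)_∞⁻¹ exp(2 ∑_{k≥1} f_k z^k/k!)`. -/
def fHyp (f : ℕ → QQ) : Prop :=
  Rgen = Sz * PowerSeries.C (R := QQ) qPoch⁻¹ *
    pexp (PowerSeries.mk fun k => if k = 0 then 0 else (2 * (k.factorial : ℚ)⁻¹) • f k)

-- `k · C(n, k) = n · C(n - 1, k - 1)`
theorem Nat.dvd_mul_choose (n k : ℕ) : n ∣ k * n.choose k := by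
  rcases k with _ | k
  · simp
  rcases n with _ | n
  · simp
  exact ⟨n.choose k, by rw [mul_comm, ← add_one_mul_choose_eq]⟩

theorem Nat.sum_dvd_mul_multinomial {α : Type*} {s : Finset α} (f : α → ℕ) {i : α}
    (hi : i ∈ s) : (∑ j ∈ s, f j) ∣ f i * Nat.multinomial s f := by
  classical
  rw [← insert_erase hi, multinomial_insert (notMem_erase i s), sum_insert (notMem_erase i s),
    ← mul_assoc]
  exact (Nat.dvd_mul_choose _ _).mul_right _

-- With `n = ∑ a_i` and `M` the multinomial coefficient, `n ∣ gcd_i (a_i M) = gcd_i (a_i) · M`.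
theorem Nat.sum_div_gcd_dvd_multinomial {α : Type*} (s : Finset α) (f : α → ℕ)
    (hf : s.gcd f ≠ 0) : (∑ i ∈ s, f i) / s.gcd f ∣ Nat.multinomial s f := by
  have hgcd_dvd_sum : s.gcd f ∣ ∑ i ∈ s, f i := Finset.dvd_sum fun i hi => Finset.gcd_dvd hi
  rw [Nat.div_dvd_iff_dvd_mul hgcd_dvd_sum (Nat.pos_of_ne_zero hf),
    ← normalize_eq (Nat.multinomial s f), ← Finset.gcd_mul_right]
  exact Finset.dvd_gcd fun i hi => Nat.sum_dvd_mul_multinomial f hi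

/-- `n / gcd(a_1,…,a_ℓ)` divides the multinomial coefficient `n!/(a_1!⋯a_ℓ!)`. -/
theorem div_gcd_dvd_multinomial (l : ℕ) (hl : 1 ≤ l) (a : Fin l → ℕ)
    (ha : ∀ i, 1 ≤ a i) (n : ℕ) (hn : ∑ i, a i = n) :
    n / Finset.univ.gcd a ∣ Nat.multinomial Finset.univ a := by
  subst hn
  refine Nat.sum_div_gcd_dvd_multinomial univ a fun h => ?_
  exact Nat.one_le_iff_ne_zero.mp (ha ⟨0, hl⟩) (gcd_eq_zero_iff.mp h _ (mem_univ _))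

end
end

section
/- Let ℓ ≥ 1 be odd and n ≥ 1. Then ∑_{k=ℓ, k≢ℓ (mod 2)}^{n} binom(n,k)·binom(k,ℓ)·B_{n−k}(1/2)·2^{ℓ−k} equals n/2 if n = ℓ+1, and equals 0 otherwise. -/
open PowerSeries Finset

noncomputable section

/-! Bernoulli polynomials form an Appell sequence, `B_m(x + y) = ∑_j C(m,j) B_{m-j}(y) x^j`,
because `B_m' = m B_{m-1}`. Taking `y = 1/2`, `x = ±1/2` and subtracting keeps the odd `j`:
`2 ∑_{j odd} C(m,j) B_{m-j}(1/2) 2^{-j} = B_m(1) - B_m(0)`, which is `1` for `m = 1` and `0`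
otherwise. With `k = ℓ + j` and `C(n,k) C(k,ℓ) = C(n,ℓ) C(n-ℓ,j)`, the sum is `C(n,ℓ)/2` times
this indicator at `m = n - ℓ`. -/

namespace Polynomial

theorem natDegree_bernoulli_le (m : ℕ) : (bernoulli m).natDegree ≤ m :=
  natDegree_sum_le_of_forall_le _ _ fun _ _ => (natDegree_monomial_le _).trans (Nat.sub_le _ _)

theorem iterate_derivative_bernoulli (m k : ℕ) :
    derivative^[k] (bernoulli m) = (m.descFactorial k : ℚ[X]) * bernoulli (m - k) := by
  induction k with
  | zero => simp
  | succ k ih =>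
    rw [Function.iterate_succ_apply', ih, derivative_natCast_mul, derivative_bernoulli,
      Nat.descFactorial_succ, Nat.sub_sub]
    push_cast
    ring

theorem hasseDeriv_bernoulli (m k : ℕ) :
    hasseDeriv k (bernoulli m) = (m.choose k : ℚ[X]) * bernoulli (m - k) := by
  have h := congrFun (factorial_smul_hasseDeriv (R := ℚ) (k := k)) (bernoulli m)
  rw [iterate_derivative_bernoulli, Nat.descFactorial_eq_factorial_mul_choose,
    LinearMap.smul_apply, nsmul_eq_mul, Nat.cast_mul, mul_assoc] at h
  exact mul_left_cancel₀ (by exact_mod_cast k.factorial_ne_zero) h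

theorem bernoulli_eval_add (m : ℕ) (x y : ℚ) :
    (bernoulli m).eval (x + y) =
      ∑ k ∈ range (m + 1), (m.choose k : ℚ) * (bernoulli (m - k)).eval y * x ^ k := by
  rw [← taylor_eval, eval_eq_sum_range' ((natDegree_taylor _ _).trans_lt
    (Nat.lt_succ_of_le (natDegree_bernoulli_le m)))]
  simp only [taylor_coeff, hasseDeriv_bernoulli, eval_mul, eval_natCast]

theorem sum_odd_choose_mul_bernoulli_eval_half (m : ℕ) :
    ∑ j ∈ (range (m + 1)).filter Odd,
        (m.choose j : ℚ) * (bernoulli (m - j)).eval 2⁻¹ * 2⁻¹ ^ j =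
      if m = 1 then 2⁻¹ else 0 := by
  have hS : 2 * ∑ j ∈ (range (m + 1)).filter Odd,
        (m.choose j : ℚ) * (bernoulli (m - j)).eval 2⁻¹ * 2⁻¹ ^ j = m * 0 ^ (m - 1) :=
    calc _ = (bernoulli m).eval (2⁻¹ + 2⁻¹) - (bernoulli m).eval (-2⁻¹ + 2⁻¹) := by
          rw [bernoulli_eval_add, bernoulli_eval_add, ← sum_sub_distrib, sum_filter, mul_sum]
          refine sum_congr rfl fun j _ => ?_
          rcases j.even_or_odd with hj | hj
          · rw [if_neg (Nat.not_odd_iff_even.mpr hj), hj.neg_pow]; ring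
          · rw [if_pos hj, hj.neg_pow]; ring
      _ = (bernoulli m).eval (1 + 0) - (bernoulli m).eval 0 := by norm_num
      _ = m * 0 ^ (m - 1) := by rw [bernoulli_eval_one_add, add_sub_cancel_left]
  rcases m with _ | _ | m
  · simpa using hS
  · norm_num at hS ⊢; linarith
  · simpa using hS

end Polynomial

theorem Finset.sum_filter_Icc_mod_two_ne_eq_sum_odd {M : Type*} [AddCommMonoid M]
    (f : ℕ → M) (l m : ℕ) :
    ∑ k ∈ (Icc l (l + m)).filter (fun k => ¬ k % 2 = l % 2), f k =
      ∑ j ∈ (range (m + 1)).filter Odd, f (l + j) := by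
  refine (sum_nbij' (l + ·) (· - l) ?_ ?_ ?_ ?_ fun _ _ => rfl).symm
  all_goals intro k hk; simp only [mem_filter, mem_range, mem_Icc, Nat.odd_iff] at hk ⊢; omega

theorem bernoulli_half_binomial_sum_general (l n : ℕ) :
    ∑ k ∈ (Finset.Icc l n).filter (fun k => ¬ k % 2 = l % 2),
      (n.choose k : ℚ) * (k.choose l : ℚ) * (Polynomial.bernoulli (n - k)).eval (2⁻¹ : ℚ) *
        (2 : ℚ) ^ ((l : ℤ) - (k : ℤ))
      = if n = l + 1 then (n : ℚ) / 2 else 0 := by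
  rcases lt_or_ge n l with hnl | hln
  · rw [Icc_eq_empty (by omega), filter_empty, sum_empty, if_neg (by omega)]
  obtain ⟨m, rfl⟩ := Nat.exists_eq_add_of_le hln
  have hterm : ∀ j : ℕ, ((l + m).choose (l + j) : ℚ) * ((l + j).choose l : ℚ) *
      (Polynomial.bernoulli (l + m - (l + j))).eval 2⁻¹ *
        (2 : ℚ) ^ ((l : ℤ) - ((l + j : ℕ) : ℤ)) =
      (l + m).choose l *
        ((m.choose j : ℚ) * (Polynomial.bernoulli (m - j)).eval 2⁻¹ * 2⁻¹ ^ j) := by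
    intro j
    have hchoose : ((l + m).choose (l + j) * (l + j).choose l : ℚ) =
        (l + m).choose l * m.choose j := by
      rw [← Nat.cast_mul, Nat.choose_mul (by omega), Nat.add_sub_cancel_left,
        Nat.add_sub_cancel_left, Nat.cast_mul]
    rw [Nat.add_sub_add_left, Nat.cast_add, sub_add_cancel_left, zpow_neg, zpow_natCast, inv_pow,
      hchoose]
    ring
  rw [Finset.sum_filter_Icc_mod_two_ne_eq_sum_odd, sum_congr rfl fun j _ => hterm j,
    ← mul_sum, Polynomial.sum_odd_choose_mul_bernoulli_eval_half]
  simp only [add_right_inj]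
  split_ifs with hm
  · subst hm
    rw [Nat.choose_succ_self_right]
    ring
  · rw [mul_zero]

/-- the Bernoulli-polynomial binomial sum identity. -/
theorem bernoulli_half_binomial_sum (l n : ℕ) (hl : Odd l) (hn : 1 ≤ n) :
    ∑ k ∈ (Finset.Icc l n).filter (fun k => ¬ k % 2 = l % 2),
      (n.choose k : ℚ) * (k.choose l : ℚ) * (Polynomial.bernoulli (n - k)).eval (2⁻¹ : ℚ) *
        (2 : ℚ) ^ ((l : ℤ) - (k : ℤ))
      = if n = l + 1 then (n : ℚ) / 2 else 0 :=
  bernoulli_half_binomial_sum_general l n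

end
end

section
/- For every even k ≥ 2, the coefficients of q^0, q^1, q^2 and q^3 in the power series f_k are −B_k/(2k), 0, 1 and 2^k−1 respectively, where B_k denotes the k-th Bernoulli number; that is, f_k = −B_k/(2k) + q^2 + (2^k−1)q^3 + O(q^4). -/
/-!
Put `F = 2 ∑_{k ≥ 1} f_k z^k/k!`, so that `(q)_∞ ∑_k R_k z^k/k! = S(z) exp F`. Only the
partitions of `n ≤ 3` matter modulo `q⁴`, and there `(q)_∞ ∑_k R_k z^k/k! ≡ 1 + N` with
`N ≡ 0 mod q²`, hence `N² ≡ 0`. On the other hand `S(z) exp b = 1` for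
`b = -∑_{k ≥ 2} B_k z^k/(k·k!)`, since `S'/S = -b'` by the generating function
`z/(e^z - 1)` of the Bernoulli numbers. As `N² = 0`, `exp N = 1 + N`, so
`S exp F ≡ S exp (b + N)`, and since `exp` is injective on series without constant term,
`F ≡ b + N mod q⁴`. The coefficient of `z^k` gives `f_k mod q⁴`.
-/

open PowerSeries Finset

noncomputable section

section FormalExp

variable {R : Type*} [CommRing R] [Algebra ℚ R]

theorem pexp_eq_subst_exp {F : R⟦X⟧} (hF : constantCoeff F = 0) :
    pexp F = (exp R).subst F := by
  ext m
  rw [coeff_subst' (HasSubst.of_constantCoeff_zero' hF),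
    finsum_eq_sum_of_support_subset _ (s := range (m + 1)) fun d hd => ?_]
  · simp [pexp, coeff_exp, Algebra.smul_def]
  · by_contra h
    have hmd : m < d := by simpa using h
    exact hd (by simp [X_pow_dvd_iff.mp (pow_dvd_pow_of_dvd (X_dvd_iff.mpr hF) d) m hmd])

theorem constantCoeff_pexp (F : R⟦X⟧) : constantCoeff (pexp F) = 1 := by
  rw [← coeff_zero_eq_constantCoeff_apply]
  simp [pexp]

theorem isUnit_pexp (F : R⟦X⟧) : IsUnit (pexp F) :=
  isUnit_iff_constantCoeff.mpr (by simp [constantCoeff_pexp])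

theorem derivative_pexp {F : R⟦X⟧} (hF : constantCoeff F = 0) :
    d⁄dX R (pexp F) = pexp F * d⁄dX R F := by
  rw [pexp_eq_subst_exp hF, derivative_subst (HasSubst.of_constantCoeff_zero' hF), derivative_exp]

theorem eq_of_derivative_eq_mul {u v d : R⟦X⟧} (hv : IsUnit v) (hu' : d⁄dX R u = u * d)
    (hv' : d⁄dX R v = v * d) (h0 : constantCoeff u = constantCoeff v) : u = v := by
  have := IsAddTorsionFree.of_module_rat R
  obtain ⟨w, rfl⟩ := hv
  refine Units.mul_inv_eq_one.mp (derivative.ext ?_ ?_)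
  · rw [derivative_one, Derivation.leibniz, derivative_inv, hu', hv', smul_eq_mul, smul_eq_mul]
    linear_combination (-(u * d * ↑w⁻¹)) * Units.inv_mul w
  · rw [map_mul, h0, ← map_mul, Units.mul_inv, map_one]

theorem pexp_add {F G : R⟦X⟧} (hF : constantCoeff F = 0) (hG : constantCoeff G = 0) :
    pexp (F + G) = pexp F * pexp G := by
  refine eq_of_derivative_eq_mul ((isUnit_pexp F).mul (isUnit_pexp G))
    (derivative_pexp (by simp [hF, hG])) ?_ (by simp [constantCoeff_pexp])
  rw [Derivation.leibniz, derivative_pexp hF, derivative_pexp hG, map_add, smul_eq_mul,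
    smul_eq_mul]
  ring

theorem pexp_injective {F G : R⟦X⟧} (hF : constantCoeff F = 0) (hG : constantCoeff G = 0)
    (h : pexp F = pexp G) : F = G := by
  have := IsAddTorsionFree.of_module_rat R
  refine derivative.ext ((isUnit_pexp F).mul_left_cancel ?_) (by rw [hF, hG])
  rw [← derivative_pexp hF, h, derivative_pexp hG]

theorem pexp_of_sq_eq_zero {N : R⟦X⟧} (hN0 : constantCoeff N = 0) (hN : N ^ 2 = 0) :
    pexp N = 1 + N := by
  ext (_ | m)
  · simp [pexp, hN0]
  · have hvanish : ∀ n, coeff (m + 1) (N ^ (n + 2)) = 0 := by simp [pow_add, hN]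
    simp [pexp, sum_range_succ', hvanish, coeff_one]

theorem pexp_map {S : Type*} [CommRing S] [Algebra ℚ S] (φ : R →+* S) (F : R⟦X⟧) :
    map φ (pexp F) = pexp (map φ F) := by
  ext m
  simp [pexp, map_rat_smul, ← map_pow]

theorem constantCoeff_Sz : constantCoeff (Sz : R⟦X⟧) = 1 := by
  rw [← coeff_zero_eq_constantCoeff_apply]
  simp [Sz]

theorem map_Sz {S : Type*} [CommRing S] [Algebra ℚ S] (φ : R →+* S) : map φ Sz = Sz := by
  ext m
  simp only [Sz, coeff_map, coeff_mk]
  split_ifs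
  · exact φ.map_rat_algebraMap _
  · exact map_zero _

end FormalExp

section Bernoulli

/-- `-log S(z)`. The term `k = 1` is left out because Mathlib's `bernoulli 1 = -1/2` would
contribute `z/2`, while `S` is even. -/
def negLogSz : ℚ⟦X⟧ := mk fun k => if 2 ≤ k then -bernoulli k / (k * k.factorial) else 0

theorem constantCoeff_negLogSz : constantCoeff negLogSz = 0 := by
  simp [negLogSz, ← coeff_zero_eq_constantCoeff_apply]

theorem X_mul_derivative_negLogSz :
    X * d⁄dX ℚ negLogSz = 1 - bernoulliPowerSeries ℚ - C (1 / 2 : ℚ) * X := by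
  ext (_ | _ | k)
  · simp [bernoulliPowerSeries]
  · rw [coeff_succ_X_mul, coeff_derivative]
    simp [negLogSz, bernoulliPowerSeries]
    norm_num
  · rw [coeff_succ_X_mul, coeff_derivative]
    simp [negLogSz, bernoulliPowerSeries, Nat.factorial_succ]
    field_simp

theorem derivative_rescale_exp (a : ℚ) :
    d⁄dX ℚ (rescale a (exp ℚ)) = C a * rescale a (exp ℚ) := by
  ext n
  simp [coeff_derivative, coeff_exp, Nat.factorial_succ, pow_succ]
  field_simp

theorem X_mul_Sz : X * Sz = rescale (1 / 2 : ℚ) (exp ℚ) - rescale (-1 / 2 : ℚ) (exp ℚ) := by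
  ext (_ | n)
  · simp only [map_sub, coeff_rescale, coeff_exp, coeff_zero_X_mul]
    simp
  · rw [coeff_succ_X_mul]
    simp only [Sz, map_sub, coeff_rescale, coeff_exp, coeff_mk, Algebra.algebraMap_self,
      RingHom.id_apply, neg_div]
    rcases Nat.even_or_odd n with ⟨t, rfl⟩ | ⟨t, rfl⟩
    · rw [if_pos ⟨t, rfl⟩, show (t + t) / 2 = t by omega,
        (show Odd (t + t + 1) from ⟨t, by ring⟩).neg_pow,
        show (4 : ℚ) ^ t = 2 ^ (t + t) by rw [← two_mul, pow_mul]; norm_num]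
      field_simp
      rw [pow_succ, ← mul_assoc, ← mul_pow]
      norm_num
    · rw [if_neg (Nat.not_even_iff_odd.mpr ⟨t, rfl⟩),
        (show Even (2 * t + 1 + 1) from ⟨t + 1, by ring⟩).neg_pow]
      ring

theorem derivative_Sz : d⁄dX ℚ (Sz : ℚ⟦X⟧) = -(Sz * d⁄dX ℚ negLogSz) := by
  have hE : rescale (-1 / 2 : ℚ) (exp ℚ) * exp ℚ = rescale (1 / 2 : ℚ) (exp ℚ) := by
    have := exp_mul_exp_eq_exp_add (A := ℚ) (-1 / 2) 1
    rwa [rescale_one, RingHom.id_apply, show (-1 / 2 + 1 : ℚ) = 1 / 2 by norm_num] at this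
  set Ep := rescale (1 / 2 : ℚ) (exp ℚ)
  set Em := rescale (-1 / 2 : ℚ) (exp ℚ)
  have hT : X * Sz = Ep - Em := X_mul_Sz
  have hD : X * d⁄dX ℚ Sz + Sz = C (1 / 2 : ℚ) * Ep - C (-1 / 2 : ℚ) * Em := by
    have := congrArg (d⁄dX ℚ) hT
    rwa [Derivation.leibniz, map_sub, derivative_rescale_exp, derivative_rescale_exp,
      derivative_X, smul_eq_mul, smul_eq_mul, mul_one] at this
  have hC : C (1 / 2 : ℚ) - C (-1 / 2 : ℚ) = 1 := by
    rw [← map_sub, ← map_one C]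
    norm_num
  have hB := bernoulliPowerSeries_mul_exp_sub_one ℚ
  -- times `X²`, the claim is an identity between `X * Sz`, `X * negLogSz'`, `e^(±X/2)` and `B`
  refine mul_left_cancel₀ (pow_ne_zero 2 (X_ne_zero (R := ℚ))) ?_
  linear_combination X * hD + (X * d⁄dX ℚ negLogSz - 1) * hT +
    (Ep - Em) * X_mul_derivative_negLogSz + bernoulliPowerSeries ℚ * hE - Em * hB + X * Em * hC

theorem Sz_mul_pexp_negLogSz : (Sz : ℚ⟦X⟧) * pexp negLogSz = 1 := by
  refine derivative.ext ?_ (by simp [constantCoeff_Sz, constantCoeff_pexp])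
  rw [Derivation.leibniz, derivative_pexp constantCoeff_negLogSz, derivative_Sz, derivative_one,
    smul_eq_mul, smul_eq_mul]
  ring

theorem eq_map_negLogSz_add {A : Type*} [CommRing A] [Algebra ℚ A] {G N : A⟦X⟧}
    (hG : constantCoeff G = 0) (hN0 : constantCoeff N = 0) (hN : N ^ 2 = 0)
    (h : Sz * pexp G = 1 + N) : G = map (algebraMap ℚ A) negLogSz + N := by
  have hb0 : constantCoeff (map (algebraMap ℚ A) negLogSz) = 0 := by
    rw [← coeff_zero_eq_constantCoeff_apply, coeff_map, coeff_zero_eq_constantCoeff_apply,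
      constantCoeff_negLogSz, map_zero]
  have hSb : Sz * pexp (map (algebraMap ℚ A) negLogSz) = 1 := by
    simpa [map_Sz, pexp_map] using congrArg (map (algebraMap ℚ A)) Sz_mul_pexp_negLogSz
  have hSz : IsUnit (Sz : A⟦X⟧) := isUnit_iff_constantCoeff.mpr (by simp [constantCoeff_Sz])
  refine pexp_injective hG (by simp [hb0, hN0]) (hSz.mul_left_cancel ?_)
  rw [h, pexp_add hb0 hN0, pexp_of_sq_eq_zero hN0 hN, ← mul_assoc, hSb, one_mul]

end Bernoulli

namespace Nat.Partition

theorem exists_parts_eq_cons {n : ℕ} (p : n.Partition) {a : ℕ} (ha : a ∈ p.parts) :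
    ∃ q : (n - a).Partition, p.parts = a ::ₘ q.parts :=
  ⟨partitionWithPartEquiv (p.parts_pos ha) (le_of_mem_parts ha) ⟨p, ha⟩, by
    rw [← partitionWithPartEquiv_symm_apply_parts (p.parts_pos ha) (le_of_mem_parts ha),
      Equiv.symm_apply_apply]⟩

theorem exists_mem_parts {n : ℕ} (p : n.Partition) (hn : n ≠ 0) : ∃ a, a ∈ p.parts :=
  Multiset.exists_mem_of_ne_zero fun h => hn (by rw [← p.parts_sum, h, Multiset.sum_zero])

theorem parts_of_two (p : Partition 2) : p.parts = {2} ∨ p.parts = {1, 1} := by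
  obtain ⟨a, ha⟩ := p.exists_mem_parts two_ne_zero
  obtain ⟨q, hq⟩ := p.exists_parts_eq_cons ha
  have := p.parts_pos ha
  have := le_of_mem_parts ha
  interval_cases a <;> simp [hq]

theorem parts_of_three (p : Partition 3) :
    p.parts = {3} ∨ p.parts = {2, 1} ∨ p.parts = {1, 1, 1} := by
  obtain ⟨a, ha⟩ := p.exists_mem_parts three_ne_zero
  obtain ⟨q, hq⟩ := p.exists_parts_eq_cons ha
  have := p.parts_pos ha
  have := le_of_mem_parts ha
  interval_cases a
  · rcases parts_of_two q with h | h <;> rw [hq, h] <;> decide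
  · simp [hq]
  · simp [hq]

theorem univ_two :
    (univ : Finset (Partition 2)) = {⟨{2}, by decide, rfl⟩, ⟨{1, 1}, by decide, rfl⟩} := by
  ext p
  simp only [mem_univ, mem_insert, mem_singleton, true_iff]
  rcases parts_of_two p with h | h
  · exact Or.inl (Partition.ext h)
  · exact Or.inr (Partition.ext h)

theorem univ_three : (univ : Finset (Partition 3)) =
    {⟨{3}, by decide, rfl⟩, ⟨{2, 1}, by decide, rfl⟩, ⟨{1, 1, 1}, by decide, rfl⟩} := by
  ext p
  simp only [mem_univ, mem_insert, mem_singleton, true_iff]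
  rcases parts_of_three p with h | h | h
  · exact Or.inl (Partition.ext h)
  · exact Or.inr (Or.inl (Partition.ext h))
  · exact Or.inr (Or.inr (Partition.ext h))

theorem rank_mem_Icc {n : ℕ} (p : n.Partition) : p.rank ∈ Icc (-(n : ℤ)) n := by
  have hsup : p.parts.sup ≤ n := Multiset.sup_le.mpr fun _ ha => le_of_mem_parts ha
  have hcard : Multiset.card p.parts ≤ n := by
    simpa [p.parts_sum] using Multiset.card_nsmul_le_sum fun _ ha => p.parts_pos ha
  rw [mem_Icc, rank]
  omega

end Nat.Partition

theorem coeff_Rmom (n k : ℕ) : coeff n (Rmom k) = ∑ p : n.Partition, (p.rank : ℚ) ^ k := by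
  classical
  have hN : ∀ m, (Nrk m n : ℚ) = #{p : n.Partition | p.rank = m} := by
    intro m
    rw [Nrk, Nat.card_eq_fintype_card, Fintype.card_subtype]
  simp only [Rmom, coeff_mk, hN]
  rw [← sum_fiberwise_of_maps_to' (fun p _ => p.rank_mem_Icc) fun m : ℤ => (m : ℚ) ^ k]
  simp only [sum_const, nsmul_eq_mul, mul_comm]

abbrev QQmod4 : Type := QQ ⧸ Ideal.span {(X : QQ) ^ 4}

def modQ4 : QQ →+* QQmod4 := Ideal.Quotient.mk _

theorem modQ4_eq_iff {f g : QQ} : modQ4 f = modQ4 g ↔ ∀ m < 4, coeff m f = coeff m g := by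
  simp only [modQ4, Ideal.Quotient.eq, Ideal.mem_span_singleton, X_pow_dvd_iff, map_sub,
    sub_eq_zero]

theorem modQ4_X_pow_four : modQ4 (X ^ 4) = 0 :=
  Ideal.Quotient.eq_zero_iff_mem.mpr (Ideal.mem_span_singleton_self _)

theorem constantCoeff_qPoch : constantCoeff qPoch = 1 := by
  rw [← coeff_zero_eq_constantCoeff_apply]
  simp [qPoch]

theorem modQ4_qPoch : modQ4 qPoch = modQ4 (1 - X - X ^ 2) := by
  refine modQ4_eq_iff.mpr fun m hm => ?_
  interval_cases m <;> simp [qPoch, prod_Icc_succ_top, mul_sub, sub_mul, ← pow_succ', ← pow_add,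
    coeff_X_pow, coeff_X, coeff_one]

/-- The partitions of `2` have ranks `1, -1`, those of `3` have ranks `2, 0, -2`. -/
theorem modQ4_Rmom (k : ℕ) : modQ4 (Rmom k) = modQ4 (C (0 ^ k) + C (0 ^ k) * X +
    C (1 + (-1) ^ k) * X ^ 2 + C (2 ^ k + 0 ^ k + (-2) ^ k) * X ^ 3) := by
  refine modQ4_eq_iff.mpr fun m hm => ?_
  rw [coeff_Rmom]
  simp only [map_add (coeff m), coeff_C, coeff_C_mul, coeff_X, coeff_X_pow]
  interval_cases m
  · simp [Nat.Partition.rank]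
  · simp [Nat.Partition.rank]
  · rw [Nat.Partition.univ_two, sum_pair (by decide)]
    norm_num [Nat.Partition.rank, add_assoc]
  · rw [Nat.Partition.univ_three, sum_insert (by decide), sum_pair (by decide)]
    norm_num [Nat.Partition.rank, add_assoc]

theorem modQ4_qPoch_mul_Rmom (k : ℕ) : modQ4 (qPoch * Rmom k) = modQ4 (C (0 ^ k) +
    C (1 + (-1) ^ k - 2 * 0 ^ k) * X ^ 2 + C (2 ^ k + (-2) ^ k - 1 - (-1) ^ k) * X ^ 3) := by
  have hX : modQ4 X ^ 4 = 0 := by rw [← map_pow, modQ4_X_pow_four]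
  rw [map_mul, modQ4_qPoch, modQ4_Rmom]
  simp only [map_add, map_sub, map_mul, map_pow, map_one, map_neg, map_ofNat, map_zero]
  linear_combination (-(1 + (-1) ^ k + (2 ^ k + 0 ^ k + (-2) ^ k)) -
    (2 ^ k + 0 ^ k + (-2) ^ k) * modQ4 X) * hX

def rankCorrection : QQZ := mk fun k => (k.factorial : ℚ)⁻¹ •
  (C (1 + (-1) ^ k - 2 * 0 ^ k) + C (2 ^ k + (-2) ^ k - 1 - (-1) ^ k) * X)

theorem map_modQ4_qPoch_mul_Rgen :
    map modQ4 (C qPoch * Rgen) = 1 + map modQ4 (C (X ^ 2) * rankCorrection) := by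
  ext k
  simp only [coeff_map, coeff_C_mul, Rgen, rankCorrection, coeff_mk, map_add, coeff_one]
  rw [mul_smul_comm, map_rat_smul, modQ4_qPoch_mul_Rmom, ← map_rat_smul, ← map_one modQ4,
    ← map_zero modQ4, ← apply_ite, ← map_add]
  congr 1
  have h0 : (if k = 0 then 1 else 0 : QQ) = C ((k.factorial : ℚ)⁻¹ * 0 ^ k) := by
    rcases k with _ | k <;> simp
  rw [h0]
  simp only [smul_eq_C_mul, map_mul]
  ring

theorem sq_map_modQ4_C_X_sq_mul (P : QQZ) : (map modQ4 (C (X ^ 2) * P)) ^ 2 = 0 := by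
  rw [← map_pow, mul_pow, ← map_pow, ← pow_mul, map_mul, map_C, modQ4_X_pow_four, map_zero,
    zero_mul]

theorem constantCoeff_map_modQ4_C_X_sq_mul_rankCorrection :
    constantCoeff (map modQ4 (C (X ^ 2) * rankCorrection)) = 0 := by
  rw [← coeff_zero_eq_constantCoeff_apply, coeff_map, coeff_C_mul]
  norm_num [rankCorrection, map_ofNat]

def fGen (f : ℕ → QQ) : QQZ := mk fun k => if k = 0 then 0 else (2 * (k.factorial : ℚ)⁻¹) • f k

theorem fHyp.C_qPoch_mul_Rgen {f : ℕ → QQ} (hf : fHyp f) :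
    C qPoch * Rgen = Sz * pexp (fGen f) := by
  rw [hf, ← mul_assoc, mul_comm (C qPoch), mul_assoc Sz, ← map_mul,
    PowerSeries.inv_mul_cancel _ (by simp [constantCoeff_qPoch]), map_one, mul_one, fGen]

theorem fHyp.map_modQ4_fGen {f : ℕ → QQ} (hf : fHyp f) : map modQ4 (fGen f) =
    map (algebraMap ℚ QQmod4) negLogSz + map modQ4 (C (X ^ 2) * rankCorrection) := by
  refine eq_map_negLogSz_add ?_ constantCoeff_map_modQ4_C_X_sq_mul_rankCorrection
    (sq_map_modQ4_C_X_sq_mul _) ?_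
  · rw [← coeff_zero_eq_constantCoeff_apply]
    simp [fGen]
  · rw [← pexp_map, ← map_Sz modQ4, ← map_mul, ← hf.C_qPoch_mul_Rgen, map_modQ4_qPoch_mul_Rgen]

theorem fHyp.modQ4_eq {f : ℕ → QQ} (hf : fHyp f) {k : ℕ} (hk : 2 ≤ k) :
    modQ4 (f k) = modQ4 (C (-bernoulli k / (2 * k)) + C ((1 + (-1) ^ k) / 2) * X ^ 2 +
      C ((2 ^ k + (-2) ^ k - 1 - (-1) ^ k) / 2) * X ^ 3) := by
  have hfac : (k.factorial : ℚ) ≠ 0 := by positivity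
  have hcoeff := congrArg (coeff k) hf.map_modQ4_fGen
  simp only [map_add, coeff_map, coeff_C_mul, fGen, negLogSz, rankCorrection, coeff_mk,
    if_neg (show k ≠ 0 by omega), if_pos hk] at hcoeff
  rw [← modQ4.map_rat_algebraMap, ← map_add] at hcoeff
  calc modQ4 (f k) = ((k.factorial : ℚ) / 2) • modQ4 ((2 * (k.factorial : ℚ)⁻¹) • f k) := by
        rw [← map_rat_smul, smul_smul,
          show (k.factorial : ℚ) / 2 * (2 * (k.factorial : ℚ)⁻¹) = 1 by field_simp, one_smul]
    _ = modQ4 (((k.factorial : ℚ) / 2) • (algebraMap ℚ QQ (-bernoulli k / (k * k.factorial)) +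
          X ^ 2 * (k.factorial : ℚ)⁻¹ • (C (1 + (-1) ^ k - 2 * 0 ^ k) +
            C (2 ^ k + (-2) ^ k - 1 - (-1) ^ k) * X))) := by
        rw [hcoeff, map_rat_smul]
    _ = _ := by
        refine modQ4_eq_iff.mpr fun m hm => ?_
        simp only [coeff_smul, map_add, PowerSeries.algebraMap_apply, Algebra.algebraMap_self,
          RingHom.id_apply, coeff_C, coeff_C_mul, coeff_X, coeff_X_pow_mul', smul_eq_mul]
        interval_cases m <;> norm_num [zero_pow (show k ≠ 0 by omega)] <;> field_simp

/-- `f_k = -B_k/(2k) + q^2 + (2^k - 1) q^3 + O(q^4)` for even `k ≥ 2`. -/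
theorem f_first_coefficients (f : ℕ → QQ) (hf : fHyp f) (k : ℕ) (hk : 2 ≤ k) (hke : Even k) :
    PowerSeries.coeff (R := ℚ) 0 (f k) = -(bernoulli k : ℚ) / (2 * k) ∧
    PowerSeries.coeff (R := ℚ) 1 (f k) = 0 ∧
    PowerSeries.coeff (R := ℚ) 2 (f k) = 1 ∧
    PowerSeries.coeff (R := ℚ) 3 (f k) = 2 ^ k - 1 := by
  have hcoeff := modQ4_eq_iff.mp (hf.modQ4_eq hk)
  rw [hke.neg_one_pow, hke.neg_pow] at hcoeff
  refine ⟨?_, ?_, ?_, ?_⟩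
  · simpa using hcoeff 0 (by norm_num)
  · simpa using hcoeff 1 (by norm_num)
  · simpa using hcoeff 2 (by norm_num)
  · have h3 := hcoeff 3 (by norm_num)
    norm_num at h3
    linarith

end
end
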